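/- Let n ≥ 2 and let U : ℂ × ℂ^{n−1} → U(n−1) be a map into the unitary group such that U(w,ζ) = I whenever ‖ζ‖ ≤ 0.1 (for all w ∈ ℂ). Then the commutator ν = Ψ⁻¹ ∘ Φ⁻¹ ∘ Ψ ∘ Φ is the identity on the region where ‖z₁‖ < 0.1 or ‖z₂‖ < 0.1: ν((x,z₁),(y,z₂)) = ((x,z₁),(y,z₂)) for all such points. -/

import Mathlib

open Matrix

/-- The space `ℂ × ℂ^{n-1}` of pairs `(x, z)`. -/
abbrev CPt (n : ℕ) := ℂ × EuclideanSpace ℂ (Fin (n - 1))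

/-- `Φ ((x,z₁),(y,z₂)) = ((x,z₁), (y, U(x,z₁) z₂))` for a map
`U : ℂ × ℂ^{n-1} → U(n-1)`. -/
noncomputable def PhiC (n : ℕ)
    (U : CPt n → Matrix.unitaryGroup (Fin (n - 1)) ℂ) :
    (CPt n × CPt n) → (CPt n × CPt n) :=
  fun p => (p.1, (p.2.1, WithLp.toLp 2 ((U p.1 : Matrix (Fin (n - 1)) (Fin (n - 1)) ℂ).mulVec p.2.2)))

/-- `Ψ ((x,z₁),(y,z₂)) = ((x, U(y,z₂) z₁), (y, z₂))`. -/
noncomputable def PsiC (n : ℕ)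
    (U : CPt n → Matrix.unitaryGroup (Fin (n - 1)) ℂ) :
    (CPt n × CPt n) → (CPt n × CPt n) :=
  fun p => ((p.1.1, WithLp.toLp 2 ((U p.2 : Matrix (Fin (n - 1)) (Fin (n - 1)) ℂ).mulVec p.1.2)), p.2)

/-- The inverse of `Φ`, obtained by replacing `U(·)` by `U(·)⁻¹`. -/
noncomputable def PhiCInv (n : ℕ)
    (U : CPt n → Matrix.unitaryGroup (Fin (n - 1)) ℂ) :
    (CPt n × CPt n) → (CPt n × CPt n) :=
  fun p => (p.1, (p.2.1, WithLp.toLp 2 (((U p.1)⁻¹ : Matrix (Fin (n - 1)) (Fin (n - 1)) ℂ).mulVec p.2.2)))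

/-- The inverse of `Ψ`, obtained by replacing `U(·)` by `U(·)⁻¹`. -/
noncomputable def PsiCInv (n : ℕ)
    (U : CPt n → Matrix.unitaryGroup (Fin (n - 1)) ℂ) :
    (CPt n × CPt n) → (CPt n × CPt n) :=
  fun p => ((p.1.1, WithLp.toLp 2 (((U p.2)⁻¹ : Matrix (Fin (n - 1)) (Fin (n - 1)) ℂ).mulVec p.1.2)), p.2)

/-- The commutator `ν = Ψ⁻¹ ∘ Φ⁻¹ ∘ Ψ ∘ Φ`. -/
noncomputable def nuC (n : ℕ)
    (U : CPt n → Matrix.unitaryGroup (Fin (n - 1)) ℂ) :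
    (CPt n × CPt n) → (CPt n × CPt n) :=
  PsiCInv n U ∘ PhiCInv n U ∘ PsiC n U ∘ PhiC n U

/-! Unitary matrices preserve the norm, so if `‖z₁‖ ≤ r` then every matrix that `Φ` or `Φ⁻¹` applies
is evaluated at a point whose second entry still has norm `≤ r`, hence is `I`, while the matrices
applied by `Ψ` and `Ψ⁻¹` are both `U(y, z₂)` and cancel. The case `‖z₂‖ ≤ r` is symmetric. -/

namespace Matrix.UnitaryGroup

variable {m : Type*} [Fintype m] [DecidableEq m]

lemma norm_toLp_mulVec (A : unitaryGroup m ℂ) (v : EuclideanSpace ℂ m) :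
    ‖WithLp.toLp 2 ((A : Matrix m m ℂ) *ᵥ v)‖ = ‖v‖ := by
  have hA : toEuclideanCLM (n := m) (𝕜 := ℂ) A ∈
      unitary (EuclideanSpace ℂ m →L[ℂ] EuclideanSpace ℂ m) :=
    Unitary.map_mem _ A.2
  exact ContinuousLinearMap.norm_map_of_mem_unitary hA v

lemma inv_mulVec_mulVec (A : unitaryGroup m ℂ) (v : m → ℂ) :
    (A : Matrix m m ℂ)⁻¹ *ᵥ ((A : Matrix m m ℂ) *ᵥ v) = v := by
  rw [mulVec_mulVec, inv_eq_left_inv (star_mul_self A), star_mul_self, one_mulVec]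

end Matrix.UnitaryGroup

section Commutator

open Matrix.UnitaryGroup

variable {n : ℕ} {U : CPt n → Matrix.unitaryGroup (Fin (n - 1)) ℂ} {r : ℝ}
  (x y : ℂ) (z₁ z₂ : EuclideanSpace ℂ (Fin (n - 1)))

lemma nuC_eq_self_of_norm_fst_le (hU : ∀ w ζ, ‖ζ‖ ≤ r → U (w, ζ) = 1) (hz₁ : ‖z₁‖ ≤ r) :
    nuC n U ((x, z₁), (y, z₂)) = ((x, z₁), (y, z₂)) := by
  have hΦ : U (x, z₁) = 1 := hU x z₁ hz₁
  have hΦ' : U (x, WithLp.toLp 2 ((U (y, z₂) : Matrix _ _ ℂ) *ᵥ z₁)) = 1 :=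
    hU x _ (by rwa [norm_toLp_mulVec])
  simp only [nuC, Function.comp_apply, PhiC, PsiC, PhiCInv, PsiCInv, hΦ, hΦ', one_val,
    one_mulVec, inv_one, WithLp.toLp_ofLp, WithLp.ofLp_toLp, inv_mulVec_mulVec]

lemma nuC_eq_self_of_norm_snd_le (hU : ∀ w ζ, ‖ζ‖ ≤ r → U (w, ζ) = 1) (hz₂ : ‖z₂‖ ≤ r) :
    nuC n U ((x, z₁), (y, z₂)) = ((x, z₁), (y, z₂)) := by
  have hΨ : U (y, z₂) = 1 := hU y z₂ hz₂
  have hΨ' : U (y, WithLp.toLp 2 ((U (x, z₁) : Matrix _ _ ℂ) *ᵥ z₂)) = 1 :=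
    hU y _ (by rwa [norm_toLp_mulVec])
  simp only [nuC, Function.comp_apply, PhiC, PsiC, PhiCInv, PsiCInv, hΨ, hΨ', one_val,
    one_mulVec, inv_one, WithLp.toLp_ofLp, WithLp.ofLp_toLp, inv_mulVec_mulVec]

end Commutator

theorem statement14_general (n : ℕ)
    (U : CPt n → Matrix.unitaryGroup (Fin (n - 1)) ℂ)
    (hU : ∀ (w : ℂ) (ζ : EuclideanSpace ℂ (Fin (n - 1))), ‖ζ‖ ≤ 0.1 → U (w, ζ) = 1)
    (x y : ℂ) (z₁ z₂ : EuclideanSpace ℂ (Fin (n - 1)))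
    (hz : ‖z₁‖ < 0.1 ∨ ‖z₂‖ < 0.1) :
    nuC n U ((x, z₁), (y, z₂)) = ((x, z₁), (y, z₂)) := by
  rcases hz with hz₁ | hz₂
  · exact nuC_eq_self_of_norm_fst_le x y z₁ z₂ hU hz₁.le
  · exact nuC_eq_self_of_norm_snd_le x y z₁ z₂ hU hz₂.le

/-- Let `n ≥ 2` and `U : ℂ × ℂ^{n-1} → U(n-1)` be a map into the unitary group
with `U(w, ζ) = I` whenever `‖ζ‖ ≤ 0.1`. Then the commutator
`ν = Ψ⁻¹ ∘ Φ⁻¹ ∘ Ψ ∘ Φ` is the identity on the region where `‖z₁‖ < 0.1` or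
`‖z₂‖ < 0.1`. -/
theorem statement14 (n : ℕ) (hn : 2 ≤ n)
    (U : CPt n → Matrix.unitaryGroup (Fin (n - 1)) ℂ)
    (hU : ∀ (w : ℂ) (ζ : EuclideanSpace ℂ (Fin (n - 1))), ‖ζ‖ ≤ 0.1 → U (w, ζ) = 1)
    (x y : ℂ) (z₁ z₂ : EuclideanSpace ℂ (Fin (n - 1)))
    (hz : ‖z₁‖ < 0.1 ∨ ‖z₂‖ < 0.1) :
    nuC n U ((x, z₁), (y, z₂)) = ((x, z₁), (y, z₂)) :=
  statement14_general n U hU x y z₁ z₂ hz
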